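/- Let $G$ be a non-trivial finite group. The Chebotarev invariant of $G$ satisfies $c(G) = \sum_{\emptyset \ne I \subseteq \max(G)} (-1)^{|I|+1} / (1 - \nu(\mathcal{H}_I^{\sharp}))$. -/

import Mathlib

open MeasureTheory ProbabilityTheory Pointwise ENNReal

namespace Chebotarev

variable {G : Type*} [Group G]

/-- The conjugacy classes of the tuple `x 0, …, x (n-1)` *generate* `G`: every choice of
representatives from these conjugacy classes generates `G`. -/
def InvGen {n : ℕ} (x : Fin n → G) : Prop :=
  ∀ y : Fin n → G, (∀ i, IsConj (x i) (y i)) → Subgroup.closure (Set.range y) = ⊤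

/-- The waiting time `τ = min {n ≥ 1 | the conjugacy classes of X₁, …, Xₙ generate G}`,
with value `∞` if no such `n` exists. -/
noncomputable def tau {Ω : Type*} (X : ℕ → Ω → G) (ω : Ω) : ℝ≥0∞ :=
  sInf {t : ℝ≥0∞ | ∃ n : ℕ, t = n ∧ 1 ≤ n ∧ InvGen (fun i : Fin n => X i ω)}

/-- `(Xₙ)` is a sequence of independent random variables, each uniformly distributed
on the (finite) group `G`, on a probability space `(Ω, P)`. -/
def IsChebSetup {Ω : Type*} [MeasurableSpace Ω] (P : Measure Ω) (X : ℕ → Ω → G) : Prop :=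
  IsProbabilityMeasure P ∧ (∀ n, @Measurable Ω G _ ⊤ (X n)) ∧
    iIndepFun (m := fun _ : ℕ => (⊤ : MeasurableSpace G)) X P ∧
    ∀ (n : ℕ) (g : G), P {ω | X n ω = g} = (Nat.card G : ℝ≥0∞)⁻¹

/-- The Chebotarev invariant `c(G) = E(τ)`. -/
noncomputable def cheb {Ω : Type*} [MeasurableSpace Ω] (P : Measure Ω) (X : ℕ → Ω → G) : ℝ :=
  (∫⁻ ω, tau X ω ∂P).toReal

/-- The secondary Chebotarev invariant `s(G) = E(τ²)`. -/
noncomputable def scheb {Ω : Type*} [MeasurableSpace Ω] (P : Measure Ω) (X : ℕ → Ω → G) : ℝ :=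
  (∫⁻ ω, (tau X ω) ^ 2 ∂P).toReal

/-- normalized density `ν(A) = |A| / |G|`. -/
noncomputable def nu (G : Type*) [Group G] (A : Set G) : ℝ :=
  (Nat.card A : ℝ) / (Nat.card G : ℝ)

/-- Conjugacy classes of subgroups of `G` (orbits of the conjugation action). -/
abbrev SubConjClass (G : Type*) [Group G] :=
  Quotient (MulAction.orbitRel (ConjAct G) (Subgroup G))

/-- The conjugacy class of a subgroup. -/
def cls (H : Subgroup G) : SubConjClass G :=
  Quotient.mk (MulAction.orbitRel (ConjAct G) (Subgroup G)) H

/-- `max(G)`: the (finite) set of conjugacy classes of maximal proper subgroups of `G`. -/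
noncomputable def maxClasses (G : Type*) [Group G] [Finite G] : Finset (SubConjClass G) :=
  haveI : Finite (Subgroup G) :=
    Finite.of_injective (fun H => (H : Set G)) SetLike.coe_injective
  Set.Finite.toFinset (Set.toFinite {c : SubConjClass G | ∃ H : Subgroup G, cls H = c ∧ IsCoatom H})

/-- `𝓗♯`: the set of elements of `G` conjugate to an element of some subgroup in the
conjugacy class `c` of subgroups. -/
def sharp (c : SubConjClass G) : Set G :=
  {x : G | ∃ H : Subgroup G, cls H = c ∧ ∃ h ∈ H, IsConj h x}

end Chebotarev

open Chebotarev

/-! Conjugacy classes of `x₁, …, xₙ` fail to generate `G` exactly when every `xᵢ` lies in `𝓗♯`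
for a single class `𝓗` of maximal subgroups. By inclusion–exclusion and independence,
`P(τ > n) = ∑_I (-1)^{|I|+1} ν(𝓗_I♯)ⁿ`, and `E τ = ∑ₙ P(τ > n)` becomes a finite sum of geometric
series. These converge because no proper subgroup of a finite group meets every conjugacy class
(Jordan), so that `ν(𝓗♯) < 1`. -/

-- Burnside: the numbers of fixed points average to one, yet the identity fixes at least two.
theorem MulAction.exists_forall_smul_ne {G α : Type*} [Group G] [Finite G] [MulAction G α]
    [Finite α] [MulAction.IsPretransitive G α] [Nontrivial α] :
    ∃ g : G, ∀ a : α, g • a ≠ a := by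
  classical
  cases nonempty_fintype G
  cases nonempty_fintype α
  by_contra! hfix
  have horbits : Fintype.card (Quotient (MulAction.orbitRel G α)) = 1 :=
    Fintype.card_eq_one_iff.2 ⟨Quotient.mk _ (Classical.arbitrary α), fun _ =>
      ((MulAction.pretransitive_iff_subsingleton_quotient G α).1 inferInstance).elim _ _⟩
  have hcount := MulAction.sum_card_fixedBy_eq_card_orbits_mul_card_group G α
  have hlt : ∑ _g : G, 1 < ∑ g : G, Fintype.card (MulAction.fixedBy α g) := by
    refine Finset.sum_lt_sum (fun g _ => ?_) ⟨1, Finset.mem_univ _, ?_⟩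
    · obtain ⟨a, ha⟩ := hfix g
      exact Fintype.card_pos_iff.2 ⟨⟨a, ha⟩⟩
    · rw [Fintype.card_congr (Equiv.setCongr (MulAction.fixedBy_one_eq_univ α G)),
        Fintype.card_congr (Equiv.Set.univ α)]
      exact Fintype.one_lt_card
  rw [hcount, horbits, one_mul, Finset.sum_const, Finset.card_univ, smul_eq_mul, mul_one] at hlt
  exact lt_irrefl _ hlt

theorem Subgroup.exists_forall_not_isConj {G : Type*} [Group G] [Finite G] {H : Subgroup G}
    (hH : H ≠ ⊤) : ∃ g : G, ∀ h ∈ H, ¬ IsConj h g := by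
  have : Nontrivial (G ⧸ H) := QuotientGroup.nontrivial_iff.2 hH
  obtain ⟨g, hg⟩ := MulAction.exists_forall_smul_ne (G := G) (α := G ⧸ H)
  refine ⟨g, fun h hh hconj => ?_⟩
  obtain ⟨c, rfl⟩ := isConj_iff.1 hconj
  refine hg c ?_
  change ((c * h * c⁻¹ * c : G) : G ⧸ H) = c
  rw [inv_mul_cancel_right, QuotientGroup.eq, mul_inv_rev, inv_mul_cancel_right]
  exact H.inv_mem hh

theorem ENNReal.sInf_natCast_eq_tsum_indicator {p : ℕ → Prop} (hp : Monotone p) :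
    sInf {t : ℝ≥0∞ | ∃ n : ℕ, t = n ∧ p n} = ∑' n, {n | ¬ p n}.indicator 1 n := by
  by_cases h : ∃ n, p n
  · classical
    set m := Nat.find h
    have hpm : ∀ n, p n ↔ m ≤ n := fun n => ⟨Nat.find_min' h, fun hn => hp hn (Nat.find_spec h)⟩
    simp only [hpm, not_le]
    have hinf : sInf {t : ℝ≥0∞ | ∃ n : ℕ, t = n ∧ m ≤ n} = m :=
      le_antisymm (sInf_le ⟨m, rfl, le_rfl⟩) (le_sInf (by rintro _ ⟨n, rfl, hn⟩; exact_mod_cast hn))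
    rw [hinf, tsum_eq_sum (s := Finset.range m) (fun n hn => by simpa using hn)]
    simp [Set.indicator_apply, Finset.filter_true_of_mem fun n hn => Finset.mem_range.1 hn]
  · have hempty : {t : ℝ≥0∞ | ∃ n : ℕ, t = n ∧ p n} = ∅ :=
      Set.eq_empty_of_forall_notMem fun _ ⟨n, _, hn⟩ => h ⟨n, hn⟩
    have hone : ∀ n, {n | ¬ p n}.indicator (1 : ℕ → ℝ≥0∞) n = 1 := fun n =>
      Set.indicator_of_mem (not_exists.1 h n) _
    rw [hempty, sInf_empty, tsum_congr hone, ENNReal.tsum_const_eq_top_of_ne_zero one_ne_zero]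

namespace Chebotarev

section Group

variable {G : Type*} [Group G]

theorem mem_sharp_cls_iff {M : Subgroup G} {a : G} :
    a ∈ sharp (cls M) ↔ ∃ b ∈ M, IsConj b a := by
  refine ⟨?_, fun hb => ⟨M, rfl, hb⟩⟩
  rintro ⟨H, hH, h, hh, hconj⟩
  obtain ⟨g, rfl⟩ : ∃ g : ConjAct G, g • M = H := MulAction.mem_orbit_iff.1 (Quotient.exact hH)
  rw [Subgroup.mem_pointwise_smul_iff_inv_smul_mem] at hh
  refine ⟨g⁻¹ • h, hh, (isConj_iff.2 ⟨ConjAct.ofConjAct g, ?_⟩).trans hconj⟩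
  rw [ConjAct.smul_def, map_inv]
  group

theorem mem_maxClasses_iff [Finite G] {c : SubConjClass G} :
    c ∈ maxClasses G ↔ ∃ H : Subgroup G, cls H = c ∧ IsCoatom H := by
  rw [maxClasses, Set.Finite.mem_toFinset, Set.mem_ofPred_eq]

theorem sharp_ne_univ [Finite G] {c : SubConjClass G} (hc : c ∈ maxClasses G) :
    sharp c ≠ Set.univ := by
  obtain ⟨M, rfl, hM⟩ := mem_maxClasses_iff.1 hc
  obtain ⟨g, hg⟩ := Subgroup.exists_forall_not_isConj hM.1
  refine fun huniv => ?_
  obtain ⟨b, hb, hconj⟩ := mem_sharp_cls_iff.1 (huniv ▸ Set.mem_univ g)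
  exact hg b hb hconj

theorem nu_nonneg (A : Set G) : 0 ≤ nu G A := by
  unfold nu
  positivity

theorem nu_lt_one [Finite G] {A : Set G} (hA : A ≠ Set.univ) : nu G A < 1 := by
  rw [nu, div_lt_one (by exact_mod_cast Nat.card_pos), Nat.card_coe_set_eq, ← Set.ncard_univ]
  exact_mod_cast Set.ncard_lt_ncard (Set.ssubset_univ_iff.2 hA)

theorem nu_biInter_sharp_lt_one [Finite G] {I : Finset (SubConjClass G)} (hI : I ⊆ maxClasses G)
    (hne : I.Nonempty) : nu G (⋂ c ∈ I, sharp c) < 1 := by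
  obtain ⟨c, hc⟩ := hne
  exact nu_lt_one fun huniv =>
    sharp_ne_univ (hI hc) (Set.eq_univ_of_subset (Set.biInter_subset_of_mem hc) huniv)

theorem not_invGen_iff [Finite G] {n : ℕ} (x : Fin n → G) :
    ¬ InvGen x ↔ ∃ c ∈ maxClasses G, ∀ i, x i ∈ sharp c := by
  constructor
  · intro h
    obtain ⟨y, hconj, hne⟩ : ∃ y : Fin n → G, (∀ i, IsConj (x i) (y i)) ∧
        Subgroup.closure (Set.range y) ≠ ⊤ := by simpa [InvGen] using h
    obtain ⟨M, hM, hle⟩ :=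
      (eq_top_or_exists_le_coatom (Subgroup.closure (Set.range y))).resolve_left hne
    refine ⟨cls M, mem_maxClasses_iff.2 ⟨M, rfl, hM⟩, fun i => ?_⟩
    exact mem_sharp_cls_iff.2 ⟨y i, hle (Subgroup.subset_closure ⟨i, rfl⟩), (hconj i).symm⟩
  · rintro ⟨c, hc, hx⟩ hgen
    obtain ⟨M, rfl, hM⟩ := mem_maxClasses_iff.1 hc
    choose y hyM hconj using fun i => mem_sharp_cls_iff.1 (hx i)
    have hle : Subgroup.closure (Set.range y) ≤ M :=
      (Subgroup.closure_le M).2 (Set.range_subset_iff.2 hyM)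
    rw [hgen y fun i => (hconj i).symm, top_le_iff] at hle
    exact hM.1 hle

theorem not_invGen_zero [Nontrivial G] (x : Fin 0 → G) : ¬ InvGen x := by
  intro h
  have htop := h x fun i => i.elim0
  rw [Set.range_eq_empty, Subgroup.closure_empty] at htop
  exact bot_ne_top htop

theorem monotone_invGen (x : ℕ → G) : Monotone fun n => InvGen fun i : Fin n => x i := by
  intro m n hmn h y hy
  have htop := h (fun i => y (Fin.castLE hmn i)) fun i => hy (Fin.castLE hmn i)
  rw [eq_top_iff, ← htop]
  exact Subgroup.closure_mono (Set.range_comp_subset_range _ _)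

end Group

section InvGenEvents

variable {G Ω : Type*} [Group G]

theorem tau_eq_tsum_indicator [Nontrivial G] (X : ℕ → Ω → G) (ω : Ω) :
    tau X ω = ∑' n, {ω' | ¬ InvGen fun i : Fin n => X i ω'}.indicator 1 ω := by
  have hgen : ∀ n, (1 ≤ n ∧ InvGen fun i : Fin n => X i ω) ↔ InvGen fun i : Fin n => X i ω :=
    fun n => and_iff_right_of_imp fun h => Nat.one_le_iff_ne_zero.2 fun hn => by
      subst hn; exact not_invGen_zero _ h
  simp only [tau, hgen]
  exact ENNReal.sInf_natCast_eq_tsum_indicator (monotone_invGen fun i => X i ω)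

theorem setOf_not_invGen_eq [Finite G] (X : ℕ → Ω → G) (n : ℕ) :
    {ω | ¬ InvGen fun i : Fin n => X i ω} =
      ⋃ c ∈ maxClasses G, ⋂ i ∈ Finset.range n, X i ⁻¹' sharp c := by
  ext ω
  simp only [Set.mem_ofPred_eq, not_invGen_iff, Set.mem_iUnion, Set.mem_iInter, Set.mem_preimage,
    Finset.mem_range, exists_prop]
  exact exists_congr fun c => and_congr_right fun _ => ⟨fun h i hi => h ⟨i, hi⟩, fun h i => h i i.2⟩

end InvGenEvents

namespace IsChebSetup

variable {G Ω : Type*} [MeasurableSpace Ω] {P : Measure Ω} {X : ℕ → Ω → G}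

theorem measurableSet_preimage (hX : IsChebSetup P X) (i : ℕ) (A : Set G) :
    MeasurableSet (X i ⁻¹' A) :=
  hX.2.1 i MeasurableSpace.measurableSet_top

theorem measure_preimage [Finite G] (hX : IsChebSetup P X) (i : ℕ) (A : Set G) :
    P (X i ⁻¹' A) = Nat.card A / Nat.card G := by
  classical
  cases nonempty_fintype G
  rw [← Set.coe_toFinset A,
    ← sum_measure_preimage_singleton _ fun g _ => hX.measurableSet_preimage i {g}]
  simp only [Set.preimage, Set.mem_singleton_iff]
  rw [Finset.sum_congr rfl fun g _ => hX.2.2.2 i g, Finset.sum_const, nsmul_eq_mul, div_eq_mul_inv,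
    Nat.card_eq_card_toFinset, Finset.toFinset_coe]

theorem measurableSet_forall_mem (hX : IsChebSetup P X) (n : ℕ) (A : Set G) :
    MeasurableSet (⋂ i ∈ Finset.range n, X i ⁻¹' A) :=
  Finset.measurableSet_biInter _ fun i _ => hX.measurableSet_preimage i A

variable [Group G]

theorem measureReal_forall_mem [Finite G] (hX : IsChebSetup P X) (n : ℕ) (A : Set G) :
    P.real (⋂ i ∈ Finset.range n, X i ⁻¹' A) = nu G A ^ n := by
  rw [measureReal_def, hX.2.2.1.measure_inter_preimage_eq_mul (Finset.range n) (sets := fun _ => A)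
      fun _ _ => MeasurableSpace.measurableSet_top,
    Finset.prod_congr rfl fun i _ => hX.measure_preimage i A, Finset.prod_const, Finset.card_range,
    ENNReal.toReal_pow, ENNReal.toReal_div, ENNReal.toReal_natCast, ENNReal.toReal_natCast, nu]

theorem lintegral_tau [Finite G] [Nontrivial G] (hX : IsChebSetup P X) :
    ∫⁻ ω, tau X ω ∂P = ∑' n, P {ω | ¬ InvGen fun i : Fin n => X i ω} := by
  have hmeas : ∀ n, MeasurableSet {ω | ¬ InvGen fun i : Fin n => X i ω} := fun n => by
    rw [setOf_not_invGen_eq]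
    exact Finset.measurableSet_biUnion _ fun c _ => hX.measurableSet_forall_mem n _
  rw [lintegral_congr (tau_eq_tsum_indicator X),
    lintegral_tsum fun n => (measurable_one.indicator (hmeas n)).aemeasurable]
  exact tsum_congr fun n => lintegral_indicator_one (hmeas n)

theorem measureReal_not_invGen [Finite G] (hX : IsChebSetup P X) (n : ℕ) :
    P.real {ω | ¬ InvGen fun i : Fin n => X i ω} =
      ∑ I ∈ (maxClasses G).powerset.filter Finset.Nonempty,
        (-1 : ℝ) ^ (I.card + 1) * nu G (⋂ c ∈ I, sharp c) ^ n := by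
  have : IsProbabilityMeasure P := hX.1
  rw [setOf_not_invGen_eq,
    measureReal_biUnion_eq_sum_powerset fun c _ => hX.measurableSet_forall_mem n _]
  refine Finset.sum_congr rfl fun I _ => ?_
  rw [Set.iInter₂_comm, ← hX.measureReal_forall_mem]
  simp only [Set.preimage_iInter₂]

end IsChebSetup

end Chebotarev

/-- **Proposition (formula for the Chebotarev invariant).** For a non-trivial finite group `G`,
`c(G) = ∑_{∅ ≠ I ⊆ max(G)} (-1)^{|I|+1} / (1 - ν(𝓗_I♯))`. -/
theorem chebotarev_invariant_formula {G : Type*} [Group G] [Finite G] [Nontrivial G]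
    {Ω : Type*} [MeasurableSpace Ω] (P : Measure Ω) (X : ℕ → Ω → G)
    (hX : IsChebSetup P X) :
    cheb P X = ∑ I ∈ (maxClasses G).powerset.filter Finset.Nonempty,
      (-1 : ℝ) ^ (I.card + 1) / (1 - nu G (⋂ c ∈ I, sharp c)) := by
  have hnu : ∀ I ∈ (maxClasses G).powerset.filter Finset.Nonempty,
      nu G (⋂ c ∈ I, sharp c) < 1 := fun I hI => by
    obtain ⟨hIS, hne⟩ := Finset.mem_filter.1 hI
    exact nu_biInter_sharp_lt_one (Finset.mem_powerset.1 hIS) hne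
  have : IsProbabilityMeasure P := hX.1
  calc cheb P X = ∑' n, P.real {ω | ¬ InvGen fun i : Fin n => X i ω} := by
        rw [cheb, hX.lintegral_tau, ENNReal.tsum_toReal_eq fun n => measure_ne_top P _]
        rfl
    _ = ∑' n, ∑ I ∈ (maxClasses G).powerset.filter Finset.Nonempty,
          (-1 : ℝ) ^ (I.card + 1) * nu G (⋂ c ∈ I, sharp c) ^ n :=
        tsum_congr hX.measureReal_not_invGen
    _ = ∑ I ∈ (maxClasses G).powerset.filter Finset.Nonempty,
          ∑' n, (-1 : ℝ) ^ (I.card + 1) * nu G (⋂ c ∈ I, sharp c) ^ n :=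
        Summable.tsum_finsetSum fun I hI =>
          (summable_geometric_of_lt_one (nu_nonneg _) (hnu I hI)).mul_left _
    _ = _ := Finset.sum_congr rfl fun I hI => by
        rw [tsum_mul_left, tsum_geometric_of_lt_one (nu_nonneg _) (hnu I hI), div_eq_mul_inv]
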